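/- For any simplicial set X, restriction along the inclusion i₂ : X^{(2)} → X of the 2-skeleton induces a bijection from simplicial set maps X → D_R(S¹) to simplicial set maps X^{(2)} → D_R(S¹). -/

import Mathlib

open CategoryTheory Simplicial Opposite

def DistR (R : Type) [CommSemiring R] (U : Type*) : Type _ :=
  {p : U →₀ R // p.sum (fun _ r => r) = 1}

noncomputable def DistR.map {R : Type} [CommSemiring R] {U V : Type*}
    (f : U → V) (p : DistR R U) : DistR R V :=
  ⟨Finsupp.mapDomain f p.1,
    (Finsupp.sum_mapDomain_index (fun _ => rfl) (fun _ _ _ => rfl)).trans p.2⟩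

theorem DistR.map_id {R : Type} [CommSemiring R] {U : Type*} (p : DistR R U) :
    DistR.map id p = p := by
  apply Subtype.ext; exact Finsupp.mapDomain_id

theorem DistR.map_comp {R : Type} [CommSemiring R] {U V W : Type*} (f : U → V) (g : V → W)
    (p : DistR R U) : DistR.map (g ∘ f) p = DistR.map g (DistR.map f p) := by
  apply Subtype.ext; exact Finsupp.mapDomain_comp

/-- The simplicial set of `R`-distributions on a simplicial set `Y`. -/
noncomputable def DRobj (R : Type) [CommSemiring R] (Y : SSet.{0}) : SSet.{0} where
  obj n := DistR R (Y.obj n)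
  map θ := TypeCat.ofHom fun p => DistR.map (Y.map θ) p
  map_id n := by
    ext p
    simp only [CategoryTheory.Functor.map_id]
    exact DistR.map_id p
  map_comp θ θ' := by
    ext p
    have : DistR.map ((_root_.id Y).map (θ ≫ θ')) p
        = DistR.map (Y.map θ' ∘ Y.map θ) p := by
      congr 1
      ext x
      simp
    simpa using this.trans (DistR.map_comp _ _ p)

/-- The unit `δ : Y → D_R(Y)`. -/
noncomputable def deltaNat (R : Type) [CommSemiring R] (Y : SSet.{0}) :
    Y ⟶ DRobj R Y where
  app n := TypeCat.ofHom fun y => ⟨Finsupp.single y 1, by rw [Finsupp.sum_single_index rfl]⟩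
  naturality n m θ := by
    ext y
    refine Subtype.ext ?_
    show Finsupp.single (Y.map θ y) 1 = Finsupp.mapDomain (Y.map θ) (Finsupp.single y 1)
    exact Finsupp.mapDomain_single.symm

/-- A map in the simplex category is constant. -/
def IsConstHom {k m : SimplexCategory} (f : k ⟶ m) : Prop :=
  ∀ i j, f.toOrderHom i = f.toOrderHom j

/-- The simplicial circle `S¹ = Δ[1]/∂Δ[1]`: the quotient of the standard 1-simplex
(whose `n`-simplices are the maps `[n] → [1]` in the simplex category) identifying
all constant maps to the single base point. -/
def SCircle : SSet.{0} where
  obj n := Quot (fun f g : (n.unop ⟶ SimplexCategory.mk 1) => IsConstHom f ∧ IsConstHom g)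
  map {n m} θ := TypeCat.ofHom <| Quot.map (fun f => θ.unop ≫ f)
    (by
      rintro f g ⟨hf, hg⟩
      refine ⟨fun i j => ?_, fun i j => ?_⟩
      · show (SimplexCategory.Hom.toOrderHom (θ.unop ≫ f)) i
          = (SimplexCategory.Hom.toOrderHom (θ.unop ≫ f)) j
        rw [SimplexCategory.comp_toOrderHom]
        exact hf _ _
      · show (SimplexCategory.Hom.toOrderHom (θ.unop ≫ g)) i
          = (SimplexCategory.Hom.toOrderHom (θ.unop ≫ g)) j
        rw [SimplexCategory.comp_toOrderHom]
        exact hg _ _)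
  map_id n := by
    ext q
    induction q using Quot.ind with
    | _ f =>
      show Quot.mk _ _ = Quot.mk _ _
      congr 1
      simp
  map_comp θ θ' := by
    ext q
    induction q using Quot.ind with
    | _ f =>
      show Quot.mk _ _ = Quot.mk _ _
      congr 1
      try simp

/-!
An `n`-simplex of `D_R(S¹)` is a distribution `p` on the base point and the arcs `i → i + 1`
(`i < n`) of `S¹` in degree `n`. Restricted to the edge `a → b` of `Δ[n]` it has arc coefficient
`∑_{a ≤ i < b} p(arc i)` and base coefficient `p(base) + ∑_{i < a} p(arc i) + ∑_{i ≥ b} p(arc i)`,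
so `p` is determined by its restrictions to the spine edges and to the long edge `0 → n`.
Conversely, for a map `g` of 2-truncations, the relations among the edges of a 2-simplex of
`D_R(S¹)` make the arc coefficient of `g` on the edges of an `n`-simplex a cocycle vanishing on
degenerate edges; it therefore telescopes along the spine, and the base coefficient on `a → b` is
the one on `0 → n` plus the arcs outside `[a, b]`. So the distribution with the spine arc
coefficients and the long-edge base coefficient restricts to `g` on every edge. As `R` has no
subtraction, the base coefficient is read off the long edge rather than computed as `1 - ∑ arcs`.
-/

open SimplexCategory

lemma isConstHom_const {m : SimplexCategory} (a : Fin 2) : IsConstHom (const m ⦋1⦌ a) :=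
  fun _ _ => rfl

lemma isConstHom_of_forall_eq {m : SimplexCategory} {f : m ⟶ ⦋1⦌} {a : Fin 2}
    (h : ∀ k, f.toOrderHom k = a) : IsConstHom f :=
  fun k k' => (h k).trans (h k').symm

namespace SCircle

def jump {n : ℕ} (i : Fin n) : ⦋n⦌ ⟶ ⦋1⦌ :=
  mkHom
    { toFun := fun k => if i.castSucc < k then 1 else 0
      monotone' := fun k k' h => by
        dsimp only
        by_cases hk : i.castSucc < k
        · rw [if_pos hk, if_pos (hk.trans_le h)]
        · rw [if_neg hk]
          exact Fin.zero_le _ }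

def base (n : ℕ) : SCircle.obj (op ⦋n⦌) := Quot.mk _ (const ⦋n⦌ ⦋1⦌ 0)

def arc {n : ℕ} (i : Fin n) : SCircle.obj (op ⦋n⦌) := Quot.mk _ (jump i)

lemma jump_apply {n : ℕ} (i : Fin n) (k : Fin (n + 1)) :
    (jump i).toOrderHom k = if i.castSucc < k then 1 else 0 := rfl

lemma not_isConstHom_jump {n : ℕ} (i : Fin n) : ¬ IsConstHom (jump i) := by
  intro h
  have := h i.castSucc i.succ
  simp [jump_apply] at this

lemma mk_eq_mk_iff {m : SimplexCategory} {f g : m ⟶ ⦋1⦌} :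
    (Quot.mk _ f : SCircle.obj (op m)) = Quot.mk _ g ↔ f = g ∨ IsConstHom f ∧ IsConstHom g := by
  refine ⟨fun h => ?_, ?_⟩
  · have hequiv : Equivalence fun f g : m ⟶ ⦋1⦌ => f = g ∨ IsConstHom f ∧ IsConstHom g :=
      ⟨fun _ => .inl rfl, by rintro _ _ (rfl | h) <;> tauto,
        by rintro _ _ _ (rfl | h) (rfl | h') <;> tauto⟩
    exact hequiv.eqvGen_iff.mp ((Quot.eq.mp h).mono fun _ _ => .inr)
  · rintro (rfl | h)
    · rfl
    · exact Quot.sound h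

lemma exists_eq_jump {n : ℕ} (f : ⦋n⦌ ⟶ ⦋1⦌) (hf : ¬ IsConstHom f) :
    ∃ i : Fin n, f = jump i := by
  classical
  let zeros := Finset.univ.filter fun k => f.toOrderHom k = 0
  have hzeros : zeros.Nonempty := by
    by_contra h
    refine hf (isConstHom_of_forall_eq (a := 1) fun k => Fin.eq_one_of_ne_zero _ fun hk => ?_)
    exact h ⟨k, by simpa [zeros] using hk⟩
  let M := zeros.max' hzeros
  have hfM : f.toOrderHom M = 0 := by simpa [zeros] using zeros.max'_mem hzeros
  have hM : M ≠ Fin.last n := by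
    intro h
    refine hf (isConstHom_of_forall_eq (a := 0) fun k => ?_)
    have := f.toOrderHom.monotone (Fin.le_last k)
    rw [← h, hfM] at this
    exact Fin.le_zero_iff.mp this
  refine ⟨M.castPred hM, ?_⟩
  ext k : 3
  rw [jump_apply, Fin.castSucc_castPred]
  split_ifs with hk
  · refine Fin.eq_one_of_ne_zero _ fun h => ?_
    exact absurd (zeros.le_max' k (by simpa [zeros] using h)) (not_le.mpr hk)
  · have := f.toOrderHom.monotone (not_lt.mp hk)
    rw [hfM] at this
    exact Fin.le_zero_iff.mp this

lemma base_or_arc {n : ℕ} (q : SCircle.obj (op ⦋n⦌)) : q = base n ∨ ∃ i, q = arc i := by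
  induction q using Quot.ind with
  | _ f =>
    by_cases hf : IsConstHom f
    · exact .inl (Quot.sound ⟨hf, isConstHom_const 0⟩)
    · obtain ⟨i, rfl⟩ := exists_eq_jump f hf
      exact .inr ⟨i, rfl⟩

lemma arc_ne_base {n : ℕ} (i : Fin n) : arc i ≠ base n := by
  intro h
  rcases mk_eq_mk_iff.mp h with h | ⟨h, -⟩
  · exact not_isConstHom_jump i (h ▸ isConstHom_const 0)
  · exact not_isConstHom_jump i h

lemma arc_injective {n : ℕ} : Function.Injective (arc (n := n)) := by
  intro i j h
  rcases mk_eq_mk_iff.mp h with h | ⟨h, -⟩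
  · have hi := congr(($h).toOrderHom i.succ)
    have hj := congr(($h).toOrderHom j.succ)
    simp only [jump_apply, Fin.castSucc_lt_succ_iff, le_refl, if_true] at hi hj
    exact le_antisymm (by by_contra c; simp [c] at hj) (by by_contra c; simp [c] at hi)
  · exact absurd h (not_isConstHom_jump i)

lemma eq_base_or_eq_arc_zero (q : SCircle.obj (op ⦋1⦌)) : q = base 1 ∨ q = arc 0 := by
  rcases base_or_arc q with h | ⟨i, h⟩
  · exact .inl h
  · exact .inr (h.trans (congrArg arc (Subsingleton.elim i 0)))

lemma map_base {m n : ℕ} (θ : ⦋m⦌ ⟶ ⦋n⦌) : SCircle.map θ.op (base n) = base m :=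
  Quot.sound ⟨fun _ _ => rfl, isConstHom_const 0⟩

lemma map_arc_eq_arc_zero_iff {n : ℕ} (e : ⦋1⦌ ⟶ ⦋n⦌) (i : Fin n) :
    SCircle.map e.op (arc i) = arc 0 ↔
      e.toOrderHom 0 ≤ i.castSucc ∧ i.castSucc < e.toOrderHom 1 := by
  change Quot.mk _ (e ≫ jump i) = Quot.mk _ (jump 0) ↔ _
  rw [mk_eq_mk_iff, or_iff_left fun h => not_isConstHom_jump 0 h.2]
  constructor
  · intro h
    have h0 := congr(($h).toOrderHom 0)
    have h1 := congr(($h).toOrderHom 1)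
    simp only [comp_toOrderHom, OrderHom.comp_coe, Function.comp_apply, jump_apply] at h0 h1
    constructor
    · by_contra hc
      rw [if_pos (not_le.mp hc)] at h0
      exact absurd h0 (by decide)
    · by_contra hc
      rw [if_neg hc] at h1
      exact absurd h1 (by decide)
  · rintro ⟨h0, h1⟩
    refine Hom.ext_one_left _ _ ?_ ?_ <;>
      simp only [comp_toOrderHom, OrderHom.comp_coe, Function.comp_apply, jump_apply]
    · rw [if_neg (not_lt.mpr h0)]
      rfl
    · rw [if_pos h1]
      rfl

lemma map_arc_eq_base_iff {n : ℕ} (e : ⦋1⦌ ⟶ ⦋n⦌) (i : Fin n) :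
    SCircle.map e.op (arc i) = base 1 ↔
      ¬ (e.toOrderHom 0 ≤ i.castSucc ∧ i.castSucc < e.toOrderHom 1) := by
  rw [← map_arc_eq_arc_zero_iff]
  rcases eq_base_or_eq_arc_zero (SCircle.map e.op (arc i)) with h | h <;>
    simp [h, arc_ne_base, (arc_ne_base _).symm]

noncomputable def equivOption (n : ℕ) : Option (Fin n) ≃ SCircle.obj (op ⦋n⦌) :=
  Equiv.ofBijective (fun o => o.elim (base n) arc) <| by
    refine ⟨?_, fun q => ?_⟩
    · rintro (_ | i) (_ | j) h
      exacts [rfl, absurd h.symm (arc_ne_base j), absurd h (arc_ne_base i),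
        congrArg some (arc_injective h)]
    · rcases base_or_arc q with rfl | ⟨i, rfl⟩
      exacts [⟨none, rfl⟩, ⟨some i, rfl⟩]

noncomputable instance (n : ℕ) : Fintype (SCircle.obj (op ⦋n⦌)) :=
  Fintype.ofEquiv _ (equivOption n)

lemma sum_univ_eq {M : Type*} [AddCommMonoid M] {n : ℕ} (F : SCircle.obj (op ⦋n⦌) → M) :
    ∑ q, F q = F (base n) + ∑ i, F (arc i) := by
  rw [← (equivOption n).sum_comp, Fintype.sum_option]
  rfl

end SCircle

namespace SimplexCategory

variable {n : ℕ} (a b c : Fin (n + 1)) (h₁ : a ≤ b) (h₂ : b ≤ c)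

lemma δ_zero_mkOfLeComp : δ 0 ≫ mkOfLeComp a b c h₁ h₂ = mkOfLe b c h₂ := Hom.ext_one_left _ _

lemma δ_one_mkOfLeComp : δ 1 ≫ mkOfLeComp a b c h₁ h₂ = mkOfLe a c (h₁.trans h₂) :=
  Hom.ext_one_left _ _

lemma δ_two_mkOfLeComp : δ 2 ≫ mkOfLeComp a b c h₁ h₂ = mkOfLe a b h₁ := Hom.ext_one_left _ _

lemma mkOfSucc_eq_mkOfLe (j : Fin n) :
    mkOfSucc j = mkOfLe j.castSucc j.succ (Fin.castSucc_le_succ j) :=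
  Hom.ext_one_left _ _

lemma diag_toOrderHom_zero : (diag n).toOrderHom 0 = 0 := rfl

lemma diag_toOrderHom_one : (diag n).toOrderHom 1 = Fin.last n := rfl

end SimplexCategory

section ArcSum

variable {M : Type*} [AddCommMonoid M] {n : ℕ}

def arcSum (c : Fin n → M) (a b : Fin (n + 1)) : M :=
  ∑ i with a ≤ i.castSucc ∧ i.castSucc < b, c i

lemma arcSum_self (c : Fin n → M) (a : Fin (n + 1)) : arcSum c a a = 0 :=
  Finset.sum_eq_zero fun i hi => by simp at hi; lia

lemma arcSum_add (c : Fin n → M) {a b d : Fin (n + 1)} (hab : a ≤ b) (hbd : b ≤ d) :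
    arcSum c a b + arcSum c b d = arcSum c a d := by
  simp only [arcSum, Finset.sum_filter, ← Finset.sum_add_distrib]
  refine Finset.sum_congr rfl fun i _ => ?_
  split_ifs <;> first | (simp; done) | (exfalso; lia)

lemma arcSum_castSucc_succ (c : Fin n → M) (j : Fin n) : arcSum c j.castSucc j.succ = c j := by
  rw [arcSum, Finset.sum_eq_single_of_mem j (by simp)]
  intro i hi hij
  simp [Fin.castSucc_lt_iff_succ_le] at hi
  lia

lemma arcSum_zero_last (c : Fin n → M) : arcSum c 0 (Fin.last n) = ∑ i, c i := by
  simp [arcSum, Fin.castSucc_lt_last]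

lemma eq_arcSum_of_cocycle {E : (⦋1⦌ ⟶ ⦋n⦌) → M}
    (hdeg : ∀ e : ⦋1⦌ ⟶ ⦋n⦌, e.toOrderHom 0 = e.toOrderHom 1 → E e = 0)
    (hcocycle : ∀ σ : ⦋2⦌ ⟶ ⦋n⦌, E (δ 1 ≫ σ) = E (δ 2 ≫ σ) + E (δ 0 ≫ σ))
    (e : ⦋1⦌ ⟶ ⦋n⦌) :
    E e = arcSum (fun i => E (mkOfSucc i)) (e.toOrderHom 0) (e.toOrderHom 1) := by
  obtain ⟨a, b, hab, rfl⟩ : ∃ a b hab, e = mkOfLe a b hab :=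
    ⟨_, _, e.toOrderHom.monotone (by decide : (0 : Fin 2) ≤ 1), Hom.ext_one_left _ _⟩
  change E _ = arcSum _ a b
  induction b using Fin.induction generalizing a with
  | zero =>
    obtain rfl := Fin.le_zero_iff.mp hab
    rw [hdeg _ rfl, arcSum_self]
  | succ j ih =>
    rcases hab.lt_or_eq with h | rfl
    · have haj : a ≤ j.castSucc := Fin.le_castSucc_iff.mpr h
      have := hcocycle (mkOfLeComp a j.castSucc j.succ haj (Fin.castSucc_le_succ j))
      rw [δ_one_mkOfLeComp, δ_two_mkOfLeComp, δ_zero_mkOfLeComp, ← mkOfSucc_eq_mkOfLe] at this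
      rw [this, ih a haj, ← arcSum_castSucc_succ (fun i => E (mkOfSucc i)) j,
        arcSum_add _ haj (Fin.castSucc_le_succ j)]
    · rw [hdeg _ rfl, arcSum_self]

end ArcSum

lemma Finsupp.mapDomain_apply_eq_sum_ite {α β M : Type*} [Fintype α] [DecidableEq β]
    [AddCommMonoid M] (f : α → β) (p : α →₀ M) (b : β) :
    p.mapDomain f b = ∑ a, if f a = b then p a else 0 := by
  rw [Finsupp.mapDomain, Finsupp.sum_apply, Finsupp.sum_fintype _ _ (by simp)]
  simp only [Finsupp.single_apply]

namespace SCircle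

variable {R : Type} [CommSemiring R] {n : ℕ}

lemma finsupp_sum_id_eq (f : SCircle.obj (op ⦋n⦌) →₀ R) :
    f.sum (fun _ r => r) = f (base n) + ∑ i, f (arc i) := by
  rw [Finsupp.sum_fintype _ _ fun _ => rfl, sum_univ_eq]

lemma dist_apply_base_add_sum (p : (DRobj R SCircle).obj (op ⦋n⦌)) :
    p.1 (base n) + ∑ i, p.1 (arc i) = 1 :=
  (finsupp_sum_id_eq p.1).symm.trans p.2

lemma dist_ext {p p' : (DRobj R SCircle).obj (op ⦋n⦌)} (hbase : p.1 (base n) = p'.1 (base n))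
    (harc : ∀ i, p.1 (arc i) = p'.1 (arc i)) : p = p' :=
  Subtype.ext <| Finsupp.ext fun q => by
    rcases base_or_arc q with rfl | ⟨i, rfl⟩
    exacts [hbase, harc i]

lemma equivOption_symm_base : (equivOption n).symm (base n) = none :=
  (equivOption n).symm_apply_eq.mpr rfl

lemma equivOption_symm_arc (i : Fin n) : (equivOption n).symm (arc i) = some i :=
  (equivOption n).symm_apply_eq.mpr rfl

section OfCoeff

noncomputable def distOfCoeff (b : R) (c : Fin n → R) (h : b + ∑ i, c i = 1) :
    (DRobj R SCircle).obj (op ⦋n⦌) :=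
  ⟨Finsupp.equivFunOnFinite.symm fun q => ((equivOption n).symm q).elim b c, by
    simpa [finsupp_sum_id_eq, equivOption_symm_base, equivOption_symm_arc] using h⟩

variable (b : R) (c : Fin n → R) (h : b + ∑ i, c i = 1)

lemma distOfCoeff_apply_base : (distOfCoeff b c h).1 (base n) = b := by
  simp [distOfCoeff, equivOption_symm_base]

lemma distOfCoeff_apply_arc (i : Fin n) : (distOfCoeff b c h).1 (arc i) = c i := by
  simp [distOfCoeff, equivOption_symm_arc]

end OfCoeff

lemma dist_map_edge_apply_arc_zero (e : ⦋1⦌ ⟶ ⦋n⦌) (p : (DRobj R SCircle).obj (op ⦋n⦌)) :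
    ((DRobj R SCircle).map e.op p).1 (arc 0) =
      arcSum (fun i => p.1 (arc i)) (e.toOrderHom 0) (e.toOrderHom 1) := by
  classical
  change Finsupp.mapDomain (SCircle.map e.op) p.1 (arc 0) = _
  rw [Finsupp.mapDomain_apply_eq_sum_ite, sum_univ_eq, map_base, if_neg (arc_ne_base 0).symm,
    zero_add, arcSum, Finset.sum_filter]
  simp_rw [map_arc_eq_arc_zero_iff]

lemma dist_map_edge_apply_base (e : ⦋1⦌ ⟶ ⦋n⦌) (p : (DRobj R SCircle).obj (op ⦋n⦌)) :
    ((DRobj R SCircle).map e.op p).1 (base 1) = p.1 (base n) +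
      arcSum (fun i => p.1 (arc i)) 0 (e.toOrderHom 0) +
      arcSum (fun i => p.1 (arc i)) (e.toOrderHom 1) (Fin.last n) := by
  classical
  change Finsupp.mapDomain (SCircle.map e.op) p.1 (base 1) = _
  rw [Finsupp.mapDomain_apply_eq_sum_ite, sum_univ_eq, map_base, if_pos rfl, add_assoc, arcSum,
    arcSum, Finset.sum_filter, Finset.sum_filter, ← Finset.sum_add_distrib]
  refine congrArg _ (Finset.sum_congr rfl fun i _ => ?_)
  have := e.toOrderHom.monotone (show (0 : Fin 2) ≤ 1 by decide)
  have := Fin.castSucc_lt_last i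
  rw [map_arc_eq_base_iff]
  split_ifs <;> first | (simp; done) | (exfalso; lia)

lemma dist_map_edge_apply_arc_zero_of_degenerate {e : ⦋1⦌ ⟶ ⦋n⦌}
    (he : e.toOrderHom 0 = e.toOrderHom 1) (p : (DRobj R SCircle).obj (op ⦋n⦌)) :
    ((DRobj R SCircle).map e.op p).1 (arc 0) = 0 := by
  rw [dist_map_edge_apply_arc_zero, he, arcSum_self]

section Triangle

variable (q : (DRobj R SCircle).obj (op ⦋2⦌))

lemma dist_map_δ_one_apply_arc_zero :
    ((DRobj R SCircle).map (δ 1).op q).1 (arc 0) =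
      ((DRobj R SCircle).map (δ 2).op q).1 (arc 0) +
      ((DRobj R SCircle).map (δ 0).op q).1 (arc 0) := by
  simp only [dist_map_edge_apply_arc_zero]
  exact (arcSum_add _ (by decide : (0 : Fin 3) ≤ 1) (by decide : (1 : Fin 3) ≤ 2)).symm

lemma dist_map_δ_zero_apply_base :
    ((DRobj R SCircle).map (δ 0).op q).1 (base 1) =
      ((DRobj R SCircle).map (δ 1).op q).1 (base 1) +
      ((DRobj R SCircle).map (δ 2).op q).1 (arc 0) := by
  simp only [dist_map_edge_apply_base, dist_map_edge_apply_arc_zero]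
  change _ + arcSum _ 0 1 + arcSum _ 2 2 = _ + arcSum _ 0 0 + arcSum _ 2 2 + arcSum _ 0 1
  simp only [arcSum_self, add_zero]

lemma dist_map_δ_two_apply_base :
    ((DRobj R SCircle).map (δ 2).op q).1 (base 1) =
      ((DRobj R SCircle).map (δ 1).op q).1 (base 1) +
      ((DRobj R SCircle).map (δ 0).op q).1 (arc 0) := by
  simp only [dist_map_edge_apply_base, dist_map_edge_apply_arc_zero]
  change _ + arcSum _ 0 0 + arcSum _ 1 2 = _ + arcSum _ 0 0 + arcSum _ 2 2 + arcSum _ 1 2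
  simp only [arcSum_self, add_zero]

end Triangle

lemma dist_ext_of_map_edge {p p' : (DRobj R SCircle).obj (op ⦋n⦌)}
    (h : ∀ e : ⦋1⦌ ⟶ ⦋n⦌, (DRobj R SCircle).map e.op p = (DRobj R SCircle).map e.op p') :
    p = p' := by
  refine dist_ext ?_ fun i => ?_
  · have := congr(($(h (diag n))).1 (base 1))
    simpa only [dist_map_edge_apply_base, diag_toOrderHom_zero, diag_toOrderHom_one, arcSum_self,
      add_zero] using this
  · have := congr(($(h (mkOfSucc i))).1 (arc 0))
    rw [dist_map_edge_apply_arc_zero, dist_map_edge_apply_arc_zero] at this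
    exact (arcSum_castSucc_succ _ i).symm.trans (this.trans (arcSum_castSucc_succ _ i))

end SCircle

section Extension

open SCircle SimplexCategory.Truncated

variable {R : Type} [CommSemiring R] {X : SSet.{0}}
  (g : (SSet.truncation 2).obj X ⟶ (SSet.truncation 2).obj (DRobj R SCircle))

noncomputable def edgeValue {n : ℕ} (x : X.obj (op ⦋n⦌)) (e : ⦋1⦌ ⟶ ⦋n⦌) :
    (DRobj R SCircle).obj (op ⦋1⦌) :=
  g.app (op ⦋1⦌₂) (X.map e.op x)

lemma edgeValue_comp {m n : ℕ} (x : X.obj (op ⦋n⦌)) (e : ⦋1⦌ ⟶ ⦋m⦌) (θ : ⦋m⦌ ⟶ ⦋n⦌) :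
    edgeValue g x (e ≫ θ) = edgeValue g (X.map θ.op x) e := by
  rw [edgeValue, edgeValue, op_comp, Functor.map_comp_apply]

lemma edgeValue_eq_map {m : ℕ} (hm : m ≤ 2) (x : X.obj (op ⦋m⦌)) (e : ⦋1⦌ ⟶ ⦋m⦌) :
    edgeValue g x e = (DRobj R SCircle).map e.op (g.app (op ⦋m, hm⦌₂) x) :=
  NatTrans.naturality_apply g (Hom.tr e).op x

variable {n : ℕ} (x : X.obj (op ⦋n⦌))

lemma edgeValue_arc_zero_of_degenerate (e : ⦋1⦌ ⟶ ⦋n⦌) (he : e.toOrderHom 0 = e.toOrderHom 1) :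
    (edgeValue g x e).1 (arc 0) = 0 := by
  have hfactor : e = const ⦋1⦌ ⦋0⦌ 0 ≫ const ⦋0⦌ ⦋n⦌ (e.toOrderHom 0) :=
    Hom.ext_one_left _ _ rfl he.symm
  rw [hfactor, edgeValue_comp, edgeValue_eq_map g (by decide : 0 ≤ 2)]
  exact dist_map_edge_apply_arc_zero_of_degenerate rfl _

section Triangle

variable (σ : ⦋2⦌ ⟶ ⦋n⦌)

lemma edgeValue_arc_zero_cocycle :
    (edgeValue g x (δ 1 ≫ σ)).1 (arc 0) =
      (edgeValue g x (δ 2 ≫ σ)).1 (arc 0) + (edgeValue g x (δ 0 ≫ σ)).1 (arc 0) := by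
  simp only [edgeValue_comp g x _ σ, edgeValue_eq_map g (le_refl 2)]
  exact dist_map_δ_one_apply_arc_zero _

lemma edgeValue_base_δ_zero :
    (edgeValue g x (δ 0 ≫ σ)).1 (base 1) =
      (edgeValue g x (δ 1 ≫ σ)).1 (base 1) + (edgeValue g x (δ 2 ≫ σ)).1 (arc 0) := by
  simp only [edgeValue_comp g x _ σ, edgeValue_eq_map g (le_refl 2)]
  exact dist_map_δ_zero_apply_base _

lemma edgeValue_base_δ_two :
    (edgeValue g x (δ 2 ≫ σ)).1 (base 1) =
      (edgeValue g x (δ 1 ≫ σ)).1 (base 1) + (edgeValue g x (δ 0 ≫ σ)).1 (arc 0) := by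
  simp only [edgeValue_comp g x _ σ, edgeValue_eq_map g (le_refl 2)]
  exact dist_map_δ_two_apply_base _

end Triangle

lemma edgeValue_arc_zero_eq_arcSum (e : ⦋1⦌ ⟶ ⦋n⦌) :
    (edgeValue g x e).1 (arc 0) = arcSum (fun i => (edgeValue g x (mkOfSucc i)).1 (arc 0))
      (e.toOrderHom 0) (e.toOrderHom 1) :=
  eq_arcSum_of_cocycle (edgeValue_arc_zero_of_degenerate g x) (edgeValue_arc_zero_cocycle g x) e

lemma edgeValue_base_eq (e : ⦋1⦌ ⟶ ⦋n⦌) :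
    (edgeValue g x e).1 (base 1) = (edgeValue g x (diag n)).1 (base 1) +
      arcSum (fun i => (edgeValue g x (mkOfSucc i)).1 (arc 0)) 0 (e.toOrderHom 0) +
      arcSum (fun i => (edgeValue g x (mkOfSucc i)).1 (arc 0)) (e.toOrderHom 1) (Fin.last n) := by
  obtain ⟨a, b, hab, rfl⟩ : ∃ a b hab, e = mkOfLe a b hab :=
    ⟨_, _, e.toOrderHom.monotone (by decide : (0 : Fin 2) ≤ 1), Hom.ext_one_left _ _⟩
  have h₁ := edgeValue_base_δ_zero g x (mkOfLeComp 0 a b (Fin.zero_le a) hab)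
  have h₂ := edgeValue_base_δ_two g x (mkOfLeComp 0 b (Fin.last n) (Fin.zero_le b) (Fin.le_last b))
  rw [δ_zero_mkOfLeComp, δ_one_mkOfLeComp, δ_two_mkOfLeComp] at h₁ h₂
  rw [h₁, h₂, edgeValue_arc_zero_eq_arcSum g x (mkOfLe 0 a _),
    edgeValue_arc_zero_eq_arcSum g x (mkOfLe b _ _)]
  exact add_right_comm _ _ _

noncomputable def extend : (DRobj R SCircle).obj (op ⦋n⦌) :=
  distOfCoeff ((edgeValue g x (diag n)).1 (base 1))
    (fun i => (edgeValue g x (mkOfSucc i)).1 (arc 0)) <| by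
    have := edgeValue_arc_zero_eq_arcSum g x (diag n)
    rw [diag_toOrderHom_zero, diag_toOrderHom_one, arcSum_zero_last] at this
    rw [← this]
    simpa using dist_apply_base_add_sum (edgeValue g x (diag n))

lemma map_edge_extend (e : ⦋1⦌ ⟶ ⦋n⦌) :
    (DRobj R SCircle).map e.op (extend g x) = edgeValue g x e := by
  refine dist_ext ?_ fun i => ?_
  · rw [dist_map_edge_apply_base, edgeValue_base_eq g x e]
    simp only [extend, distOfCoeff_apply_base, distOfCoeff_apply_arc]
  · obtain rfl := Subsingleton.elim i 0
    rw [dist_map_edge_apply_arc_zero, edgeValue_arc_zero_eq_arcSum g x e]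
    simp only [extend, distOfCoeff_apply_arc]

lemma extend_map {m : ℕ} (θ : ⦋m⦌ ⟶ ⦋n⦌) :
    extend g (X.map θ.op x) = (DRobj R SCircle).map θ.op (extend g x) :=
  dist_ext_of_map_edge fun e => by
    rw [map_edge_extend, ← Functor.map_comp_apply, ← op_comp, map_edge_extend, edgeValue_comp]

lemma extend_eq_app (hn : n ≤ 2) : extend g x = g.app (op ⦋n, hn⦌₂) x :=
  dist_ext_of_map_edge fun e => by rw [map_edge_extend, edgeValue_eq_map g hn]

noncomputable def extension : X ⟶ DRobj R SCircle where
  app k := TypeCat.ofHom fun x => extend g (n := k.unop.len) x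
  naturality k k' θ := by
    ext x
    exact extend_map g x θ.unop

lemma truncation_map_extension : (SSet.truncation 2).map (extension g) = g := by
  ext k x
  exact extend_eq_app g x k.unop.2

lemma map_edge_app_eq_edgeValue (f : X ⟶ DRobj R SCircle) (e : ⦋1⦌ ⟶ ⦋n⦌) :
    (DRobj R SCircle).map e.op (f.app _ x) = edgeValue ((SSet.truncation 2).map f) x e :=
  (NatTrans.naturality_apply f e.op x).symm

lemma truncation_map_injective :
    Function.Injective fun f : X ⟶ DRobj R SCircle => (SSet.truncation 2).map f := by
  intro f f' h
  ext ⟨⟨n⟩⟩ x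
  refine dist_ext_of_map_edge fun e => ?_
  exact (map_edge_app_eq_edgeValue x f e).trans
    ((congrArg (edgeValue · x e) h).trans (map_edge_app_eq_edgeValue x f' e).symm)

end Extension

theorem stmt9_general (R : Type) [CommSemiring R]
    (X : SSet.{0}) :
    Function.Bijective
      (fun f : X ⟶ DRobj R SCircle => (SSet.truncation 2).map f) :=
  ⟨truncation_map_injective, fun g => ⟨extension g, truncation_map_extension g⟩⟩

/-- Restriction along the inclusion of the 2-skeleton induces a bijection
`sDist(X, S¹) → sDist(X^{(2)}, S¹)`: equivalently (by the skeleton–truncation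
adjunction), 2-truncation is a bijection from simplicial set maps `X → D_R(S¹)` to maps
of 2-truncated simplicial sets `tr₂ X → tr₂ D_R(S¹)`. -/
theorem stmt9 (R : Type) [CommSemiring R]
    (hzsf : ∀ a b : R, a + b = 0 → a = 0 ∧ b = 0) (X : SSet.{0}) :
    Function.Bijective
      (fun f : X ⟶ DRobj R SCircle => (SSet.truncation 2).map f) :=
  stmt9_general R X
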